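/- arXiv:2010.02787 — 3 statements merged into one kernel-verified Lean document; each statement's English description precedes it below -/
import Mathlib

section
/- Let n' ≥ 1 and 1 ≤ w ≤ n' be integers. For a circular binary sequence s ∈ {0,1}^{n'}, let W(s) denote the sum of the lengths of all success runs of length at least w. If s, s' ∈ {0,1}^{n'} differ in exactly one coordinate, then |W(s) − W(s')| ≤ 2w + 1. -/
/-- The length of the maximal circular run of `true`s (success run) of `s` containing
the index `i`, i.e. the largest `k ≤ n'` such that some block of `k` circularly
consecutive indices, all carrying the value `true`, contains `i`.  It is `0` if
`s i = false`. -/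
noncomputable def runLen {n' : ℕ} (s : ZMod n' → Bool) (i : ZMod n') : ℕ :=
  sSup {k : ℕ | k ≤ n' ∧ ∃ j : ZMod n',
    (∀ m : ℕ, m < k → s (j + (m : ZMod n')) = true) ∧
    ∃ t : ℕ, t < k ∧ i = j + (t : ZMod n')}

/-- The sum of the lengths of all success runs of length at least `w` of the circular
binary sequence `s`, i.e. the number of indices lying in a success run of length
at least `w`. -/
noncomputable def runSumGE {n' : ℕ} (w : ℕ) (s : ZMod n' → Bool) : ℕ :=
  Nat.card {i : ZMod n' | w ≤ runLen s i}

namespace RunAux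

variable {n' : ℕ}

/-- The defining set of `runLen`. -/
def runSet (s : ZMod n' → Bool) (i : ZMod n') : Set ℕ :=
  {k : ℕ | k ≤ n' ∧ ∃ j : ZMod n',
    (∀ m : ℕ, m < k → s (j + (m : ZMod n')) = true) ∧
    ∃ t : ℕ, t < k ∧ i = j + (t : ZMod n')}

lemma runLen_eq (s : ZMod n' → Bool) (i : ZMod n') : runLen s i = sSup (runSet s i) := rfl

lemma bddAbove_runSet (s : ZMod n' → Bool) (i : ZMod n') : BddAbove (runSet s i) :=
  ⟨n', fun _ hx => hx.1⟩

lemma le_runLen (s : ZMod n' → Bool) (i : ZMod n') {k : ℕ} (hk : k ∈ runSet s i) :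
    k ≤ runLen s i := le_csSup (bddAbove_runSet s i) hk

lemma runLen_mem {w : ℕ} (hw : 1 ≤ w) (s : ZMod n' → Bool) (i : ZMod n')
    (h : w ≤ runLen s i) : runLen s i ∈ runSet s i := by
  rcases (runSet s i).eq_empty_or_nonempty with he | hne
  · rw [runLen_eq, he, csSup_empty] at h
    simp at h; omega
  · exact Nat.sSup_mem hne (bddAbove_runSet s i)

lemma runLen_mono {s s' : ZMod n' → Bool} (h : ∀ j, s j = true → s' j = true)
    (i : ZMod n') : runLen s i ≤ runLen s' i := by
  rcases (runSet s i).eq_empty_or_nonempty with he | hne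
  · rw [runLen_eq, he, csSup_empty]
    exact bot_le
  · refine csSup_le_csSup (bddAbove_runSet s' i) hne ?_
    rintro k ⟨hk, j, hall, t, ht, hi⟩
    exact ⟨hk, j, fun m hm => h _ (hall m hm), t, ht, hi⟩

lemma cast_inj_of_lt [NeZero n'] {a b : ℕ} (ha : a < n') (hb : b < n')
    (h : (a : ZMod n') = b) : a = b := by
  have := congrArg ZMod.val h
  rwa [ZMod.val_cast_of_lt ha, ZMod.val_cast_of_lt hb] at this

/-- Key localisation step: an index that qualifies for `s'` but not for `s` lies
within distance `w - 1` of the flipped coordinate `i₀`. -/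
lemma key [NeZero n'] (w : ℕ) (hw : 1 ≤ w) (s s' : ZMod n' → Bool) (i₀ : ZMod n')
    (heq : ∀ j : ZMod n', j ≠ i₀ → s j = s' j)
    (j : ZMod n') (hj' : w ≤ runLen s' j) (hj : runLen s j < w) :
    ∃ t : ℤ, t ∈ Finset.Icc (-(w - 1 : ℤ)) (w - 1) ∧ j = i₀ + (t : ZMod n') := by
  obtain ⟨hLn, j₀, hall, p, hp, hjp⟩ := runLen_mem hw s' j hj'
  set L := runLen s' j with hL
  by_cases hq : ∃ q, q < L ∧ i₀ = j₀ + (q : ZMod n')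
  · obtain ⟨q, hqL, hi0⟩ := hq
    rcases lt_trichotomy p q with hpq | hpq | hpq
    · -- j is to the left of i₀
      set d := q - p with hd
      have hd1 : 1 ≤ d := by omega
      have hrun : d ≤ runLen s j := by
        refine le_runLen s j ⟨by omega, j₀ + (p : ZMod n'), fun m hm => ?_, 0, by omega, by simp [hjp]⟩
        have hne : j₀ + (p : ZMod n') + (m : ZMod n') ≠ i₀ := by
          rw [hi0]
          intro hcon
          have : ((p + m : ℕ) : ZMod n') = (q : ZMod n') := by
            push_cast
            exact add_left_cancel (by rw [← add_assoc]; exact hcon)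
          have := cast_inj_of_lt (by omega) (by omega) this
          omega
        rw [heq _ hne]
        have : j₀ + (p : ZMod n') + (m : ZMod n') = j₀ + ((p + m : ℕ) : ZMod n') := by
          push_cast; ring
        rw [this]
        exact hall _ (by omega)
      have hdw : d < w := by omega
      refine ⟨-(d : ℤ), by simp only [Finset.mem_Icc]; omega, ?_⟩
      have : i₀ = j + (d : ZMod n') := by
        rw [hi0, hjp]
        have : (q : ℕ) = p + d := by omega
        rw [this]; push_cast; ring
      rw [this]; push_cast; ring
    · -- j = i₀
      exact ⟨0, by simp only [Finset.mem_Icc]; omega, by rw [hjp, hi0, hpq]; simp⟩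
    · -- j is to the right of i₀
      set d := p - q with hd
      have hd1 : 1 ≤ d := by omega
      have hrun : d ≤ runLen s j := by
        refine le_runLen s j ⟨by omega, j₀ + ((q + 1 : ℕ) : ZMod n'), fun m hm => ?_, d - 1, by omega, ?_⟩
        · have hne : j₀ + ((q + 1 : ℕ) : ZMod n') + (m : ZMod n') ≠ i₀ := by
            rw [hi0]
            intro hcon
            have : ((q + 1 + m : ℕ) : ZMod n') = (q : ZMod n') := by
              push_cast at hcon ⊢
              linear_combination hcon
            have := cast_inj_of_lt (by omega) (by omega) this
            omega
          rw [heq _ hne]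
          have : j₀ + ((q + 1 : ℕ) : ZMod n') + (m : ZMod n') = j₀ + ((q + 1 + m : ℕ) : ZMod n') := by
            push_cast; ring
          rw [this]
          exact hall _ (by omega)
        · rw [hjp]
          have : (p : ℕ) = q + 1 + (d - 1) := by omega
          rw [this]; push_cast; ring
      have hdw : d < w := by omega
      refine ⟨(d : ℤ), by simp only [Finset.mem_Icc]; omega, ?_⟩
      rw [hjp, hi0]
      have : (p : ℕ) = q + d := by omega
      rw [this]; push_cast; ring
  · -- the run does not contain i₀ : contradiction
    push_neg at hq
    have : L ≤ runLen s j := by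
      refine le_runLen s j ⟨hLn, j₀, fun m hm => ?_, p, hp, hjp⟩
      rw [heq _ (fun hcon => hq m hm hcon.symm)]
      exact hall m hm
    omega

/-- One-sided version of the theorem, assuming `s i₀ = false`. -/
lemma half (n' w : ℕ) (hn' : 1 ≤ n') (hw : 1 ≤ w)
    (s s' : ZMod n' → Bool) (i₀ : ZMod n')
    (hs : s i₀ = false) (heq : ∀ j : ZMod n', j ≠ i₀ → s j = s' j) :
    runSumGE w s ≤ runSumGE w s' ∧ runSumGE w s' ≤ runSumGE w s + (2 * w + 1) := by
  haveI : NeZero n' := ⟨by omega⟩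
  have hmono : ∀ j, s j = true → s' j = true := by
    intro j hj
    by_cases hji : j = i₀
    · rw [hji, hs] at hj; exact absurd hj (by simp)
    · rw [← heq j hji]; exact hj
  set A : Set (ZMod n') := {i : ZMod n' | w ≤ runLen s i} with hA
  set A' : Set (ZMod n') := {i : ZMod n' | w ≤ runLen s' i} with hA'
  have hsub : A ⊆ A' := fun i hi => le_trans hi (runLen_mono hmono i)
  have hAfin : A.Finite := Set.toFinite A
  have hA'fin : A'.Finite := Set.toFinite A'
  have hcard1 : runSumGE w s = A.ncard := Nat.card_coe_set_eq A
  have hcard2 : runSumGE w s' = A'.ncard := Nat.card_coe_set_eq A'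
  constructor
  · rw [hcard1, hcard2]
    exact Set.ncard_le_ncard hsub hA'fin
  · rw [hcard1, hcard2]
    have hdiffsub : A' \ A ⊆ (fun t : ℤ => i₀ + (t : ZMod n')) ''
        ↑(Finset.Icc (-(w - 1 : ℤ)) (w - 1)) := by
      rintro j ⟨hj1, hj2⟩
      obtain ⟨t, ht, hjt⟩ := key w hw s s' i₀ heq j hj1 (by simp only [hA, Set.mem_setOf_eq, not_le] at hj2; exact hj2)
      exact ⟨t, by simpa using ht, hjt.symm⟩
    have h1 : (A' \ A).ncard ≤ 2 * w + 1 := by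
      calc (A' \ A).ncard
          ≤ ((fun t : ℤ => i₀ + (t : ZMod n')) ''
              ↑(Finset.Icc (-(w - 1 : ℤ)) (w - 1))).ncard :=
            Set.ncard_le_ncard hdiffsub (Set.toFinite _)
        _ ≤ (↑(Finset.Icc (-(w - 1 : ℤ)) (w - 1)) : Set ℤ).ncard :=
            Set.ncard_image_le (Set.toFinite _)
        _ = (Finset.Icc (-(w - 1 : ℤ)) (w - 1)).card := Set.ncard_coe_finset _
        _ ≤ 2 * w + 1 := by rw [Int.card_Icc]; omega
    have h2 : (A' \ A).ncard + A.ncard = A'.ncard :=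
      Set.ncard_diff_add_ncard_of_subset hsub hA'fin
    omega

end RunAux

/-- **Bounded differences for the sum of long run lengths.**
If two circular binary sequences differ in exactly one coordinate, then the sums of the
lengths of their success runs of length at least `w` differ by at most `2w + 1`. -/
theorem runSumGE_bounded_differences
    (n' w : ℕ) (hn' : 1 ≤ n') (hw : 1 ≤ w) (hwn : w ≤ n')
    (s s' : ZMod n' → Bool) (i₀ : ZMod n')
    (hdiff : s i₀ ≠ s' i₀) (heq : ∀ j : ZMod n', j ≠ i₀ → s j = s' j) :
    |(runSumGE w s : ℤ) - (runSumGE w s' : ℤ)| ≤ 2 * w + 1 := by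
  cases hs : s i₀
  · have hs' : s' i₀ = true := by
      cases hs'' : s' i₀
      · rw [hs, hs''] at hdiff; simp at hdiff
      · rfl
    obtain ⟨h1, h2⟩ := RunAux.half n' w hn' hw s s' i₀ hs heq
    rw [abs_le]
    constructor <;> push_cast <;> omega
  · have hs' : s' i₀ = false := by
      cases hs'' : s' i₀
      · rfl
      · rw [hs, hs''] at hdiff; simp at hdiff
    obtain ⟨h1, h2⟩ := RunAux.half n' w hn' hw s' s i₀ hs'
      (fun j hj => (heq j hj).symm)
    rw [abs_le]
    constructor <;> push_cast <;> omega
end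

section
/- Fix constants C ∈ ℝ and τ > 0. For n large enough that γ(n,τ) > 0, set R = 2·log(n) + C, ρ(n) = R − log((π/2)·e^{C/2}·γ(n,τ)), and θ_n = arccos((cosh(ρ(n))² − cosh(R))/sinh(ρ(n))²). Then (2π/θ_n)·γ(n,τ)/(2n) → 1 as n → ∞; that is, the number of sectors of angular width θ_n needed to cover the full angle 2π equals (2n/γ(n,τ))·(1 ± o(1)). -/
open Filter

/-- Twice iterated natural logarithm. -/
noncomputable def loglog (n : ℕ) : ℝ := Real.log (Real.log n)

/-- Thrice iterated natural logarithm. -/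
noncomputable def logloglog (n : ℕ) : ℝ := Real.log (Real.log (Real.log n))

/-- `γ(n, τ) = log(τ·log^{(2)}(n) / (2·(log^{(3)}(n))²))`. -/
noncomputable def gam (n : ℕ) (τ : ℝ) : ℝ :=
  Real.log (τ * loglog n / (2 * (logloglog n) ^ 2))

/-- The radius `R = 2·log n + C` of the hyperbolic disk. -/
noncomputable def bigR (C : ℝ) (n : ℕ) : ℝ := 2 * Real.log n + C

/-- The threshold radius `ρ(n) = R − log((π/2)·e^{C/2}·γ(n,τ))`. -/
noncomputable def rho (C τ : ℝ) (n : ℕ) : ℝ :=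
  bigR C n - Real.log (Real.pi / 2 * Real.exp (C / 2) * gam n τ)

/-- `θ_n`, the maximal angular distance at which two points of radius `ρ(n)` are
adjacent in the hyperbolic disk of radius `R`, i.e. the angle `θ` with
`cosh(ρ(n))² − sinh(ρ(n))²·cos(θ) = cosh(R)`. -/
noncomputable def theta (C τ : ℝ) (n : ℕ) : ℝ :=
  Real.arccos ((Real.cosh (rho C τ n) ^ 2 - Real.cosh (bigR C n)) /
    Real.sinh (rho C τ n) ^ 2)

/-! Writing `cosh R = 1 + 2 sinh²(R/2)` turns the defining equation of `θ_n` into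
`cos θ_n = 1 - 2 s_n²` with `s_n = sinh(R/2) / sinh ρ(n)`, so `θ_n = 2 arcsin s_n`.
By construction `e^{R/2 - ρ(n)} = π γ(n,τ) / (2n)`, and since `R, ρ(n) → ∞` and
`sinh x ~ eˣ/2`, `s_n ~ π γ(n,τ) / (2n)`. As `γ(n,τ) = O(log n)`, this tends to `0`,
where `arcsin x ~ x`; hence `θ_n / 2 ~ π γ(n,τ) / (2n)`. -/

open Topology

namespace Real

theorem sinh_div_exp (x : ℝ) : sinh x / exp x = (1 - exp (-(2 * x))) / 2 := by
  rw [sinh_eq, show -(2 * x) = -x + -x by ring, exp_add]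
  have h : exp x * exp (-x) = 1 := by rw [← exp_add, add_neg_cancel, exp_zero]
  field_simp
  linear_combination exp (-x) * h

theorem tendsto_sinh_div_exp_atTop : Tendsto (fun x => sinh x / exp x) atTop (𝓝 (1 / 2)) := by
  simp_rw [sinh_div_exp]
  have h := (tendsto_exp_neg_atTop_nhds_zero.comp (tendsto_id.const_mul_atTop two_pos))
  simpa using (h.const_sub 1).div_const 2

theorem tendsto_sinh_div_sinh_div_exp_sub {ι : Type*} {l : Filter ι} {a b : ι → ℝ}
    (ha : Tendsto a l atTop) (hb : Tendsto b l atTop) :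
    Tendsto (fun i => sinh (a i) / sinh (b i) / exp (a i - b i)) l (𝓝 1) := by
  have h := (tendsto_sinh_div_exp_atTop.comp ha).div (tendsto_sinh_div_exp_atTop.comp hb)
    (by norm_num)
  rw [div_self (by norm_num)] at h
  refine h.congr fun i => ?_
  simp only [Pi.div_apply, Function.comp_apply, exp_sub]
  field_simp

theorem cosh_sq_sub_cosh_div_sinh_sq (a : ℝ) {b : ℝ} (hb : b ≠ 0) :
    (cosh b ^ 2 - cosh a) / sinh b ^ 2 = 1 - 2 * (sinh (a / 2) / sinh b) ^ 2 := by
  have hs : sinh b ≠ 0 := sinh_ne_zero.2 hb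
  rw [show cosh a = cosh (2 * (a / 2)) by ring_nf, cosh_two_mul, cosh_sq, cosh_sq]
  field_simp
  ring

theorem arccos_one_sub_two_mul_sq {x : ℝ} (h0 : 0 ≤ x) (h1 : x ≤ 1) :
    arccos (1 - 2 * x ^ 2) = 2 * arcsin x := by
  have hcos : 1 - 2 * x ^ 2 = cos (2 * arcsin x) := by
    rw [cos_two_mul, cos_sq', sin_arcsin (by linarith) h1]
    ring
  rw [hcos, arccos_cos]
  · linarith [arcsin_nonneg.2 h0]
  · linarith [arcsin_le_pi_div_two x]

theorem tendsto_arcsin_div_self : Tendsto (fun x => arcsin x / x) (𝓝[≠] 0) (𝓝 1) := by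
  have h := hasDerivAt_iff_tendsto_slope_zero.1
    (by simpa using hasDerivAt_arcsin (x := 0) (by norm_num) (by norm_num))
  simpa [arcsin_zero, div_eq_inv_mul] using h

theorem tendsto_div_log_sq_atTop : Tendsto (fun x => x / log x ^ 2) atTop atTop := by
  have h : Tendsto (fun x => log x ^ 2 / x) atTop (𝓝[>] 0) := by
    refine tendsto_nhdsWithin_iff.2
      ⟨by simpa using tendsto_pow_log_div_mul_add_atTop 1 0 2 one_ne_zero, ?_⟩
    filter_upwards [eventually_gt_atTop 1] with x hx
    exact div_pos (pow_pos (log_pos hx) 2) (by linarith)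
  exact h.inv_tendsto_nhdsGT_zero.congr fun x => inv_div _ _

end Real

lemma tendsto_nhdsGT_zero_of_div_tendsto_one {ι : Type*} {l : Filter ι} {f g : ι → ℝ}
    (hfg : Tendsto (fun i => f i / g i) l (𝓝 1)) (hg : Tendsto g l (𝓝[>] 0)) :
    Tendsto f l (𝓝[>] 0) := by
  have hpos : ∀ᶠ i in l, 0 < g i ∧ 0 < f i / g i :=
    (hg.eventually self_mem_nhdsWithin).and (hfg.eventually (lt_mem_nhds one_pos))
  have hlim := hfg.mul (tendsto_nhds_of_tendsto_nhdsWithin hg)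
  rw [mul_zero] at hlim
  refine tendsto_nhdsWithin_iff.2 ⟨hlim.congr' ?_, ?_⟩ <;> filter_upwards [hpos] with i h
  · exact div_mul_cancel₀ _ h.1.ne'
  · exact (div_pos_iff_of_pos_right h.1).1 h.2

open Real

section

variable {C τ : ℝ}

lemma tendsto_loglog_atTop : Tendsto loglog atTop atTop :=
  tendsto_log_atTop.comp (tendsto_log_atTop.comp tendsto_natCast_atTop_atTop)

lemma tendsto_gam_atTop (hτ : 0 < τ) : Tendsto (gam · τ) atTop atTop := by
  have h := (tendsto_div_log_sq_atTop.const_mul_atTop (half_pos hτ)).comp tendsto_loglog_atTop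
  refine tendsto_log_atTop.comp (h.congr fun n => ?_)
  simp only [Function.comp_apply, logloglog, loglog]
  ring

lemma gam_le_mul_log (hτ : 0 < τ) : ∀ᶠ n : ℕ in atTop, gam n τ ≤ τ / 2 * log n := by
  filter_upwards [(tendsto_log_atTop.comp tendsto_loglog_atTop).eventually_ge_atTop 1,
    tendsto_loglog_atTop.eventually_ge_atTop 0, eventually_ge_atTop 1] with n h3 h2 h1
  have hlog : 0 ≤ log n := log_nonneg (by exact_mod_cast h1)
  have h3' : 1 ≤ logloglog n := h3
  calc gam n τ ≤ τ * loglog n / (2 * logloglog n ^ 2) := log_le_self (by positivity)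
    _ ≤ τ * loglog n / 2 := by gcongr; nlinarith
    _ ≤ τ / 2 * log n := by
      rw [mul_div_right_comm]
      gcongr
      exact log_le_self hlog

lemma tendsto_pi_mul_gam_div_atTop (hτ : 0 < τ) :
    Tendsto (fun n : ℕ => π * gam n τ / (2 * n)) atTop (𝓝[>] 0) := by
  have hlog : Tendsto (fun n : ℕ => log n / n) atTop (𝓝 0) := by
    simpa [Function.comp_def] using
      (tendsto_pow_log_div_mul_add_atTop 1 0 1 one_ne_zero).comp tendsto_natCast_atTop_atTop
  have hpos : ∀ᶠ n : ℕ in atTop, 0 < π * gam n τ / (2 * n) := by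
    filter_upwards [(tendsto_gam_atTop hτ).eventually_gt_atTop 0, eventually_gt_atTop 0]
      with n hg hn
    positivity
  have hle : ∀ᶠ n : ℕ in atTop, π * gam n τ / (2 * n) ≤ π * τ / 4 * (log n / n) := by
    filter_upwards [gam_le_mul_log hτ] with n hg
    calc π * gam n τ / (2 * n) ≤ π * (τ / 2 * log n) / (2 * n) := by gcongr
      _ = π * τ / 4 * (log n / n) := by ring
  refine tendsto_nhdsWithin_iff.2 ⟨squeeze_zero' (hpos.mono fun _ => le_of_lt) hle ?_, hpos⟩
  simpa using hlog.const_mul (π * τ / 4)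

variable (C) in
lemma tendsto_bigR_atTop : Tendsto (bigR C) atTop atTop :=
  tendsto_atTop_add_const_right _ C
    ((tendsto_log_atTop.comp tendsto_natCast_atTop_atTop).const_mul_atTop two_pos)

lemma exp_bigR_half_sub_rho {n : ℕ} (hn : 0 < n) (hg : 0 < gam n τ) :
    exp (bigR C n / 2 - rho C τ n) = π * gam n τ / (2 * n) := by
  have hK : 0 < π / 2 * exp (C / 2) * gam n τ := by positivity
  have hR : exp (bigR C n / 2) = n * exp (C / 2) := by
    rw [bigR, show (2 * log n + C) / 2 = log n + C / 2 by ring, exp_add,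
      exp_log (by exact_mod_cast hn)]
  rw [rho, show ∀ x y : ℝ, x / 2 - (x - y) = y - x / 2 by intros; ring, exp_sub, exp_log hK, hR]
  field_simp

variable (C) in
lemma tendsto_rho_atTop (hτ : 0 < τ) : Tendsto (rho C τ) atTop atTop := by
  refine tendsto_atTop_mono' _ ?_ ((tendsto_bigR_atTop C).atTop_div_const two_pos)
  filter_upwards [tendsto_nhds_of_tendsto_nhdsWithin (tendsto_pi_mul_gam_div_atTop hτ)
      |>.eventually (eventually_lt_nhds one_pos),
    (tendsto_gam_atTop hτ).eventually_gt_atTop 0, eventually_gt_atTop 0] with n hq hg hn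
  rw [← exp_bigR_half_sub_rho (C := C) hn hg, exp_lt_one_iff] at hq
  linarith

noncomputable def sinHalfTheta (C τ : ℝ) (n : ℕ) : ℝ :=
  sinh (bigR C n / 2) / sinh (rho C τ n)

lemma theta_eq_two_mul_arcsin {n : ℕ} (hR : 0 ≤ bigR C n) (hρ : 0 < rho C τ n)
    (hs : sinHalfTheta C τ n ≤ 1) :
    theta C τ n = 2 * arcsin (sinHalfTheta C τ n) := by
  rw [theta, cosh_sq_sub_cosh_div_sinh_sq _ hρ.ne']
  refine arccos_one_sub_two_mul_sq (div_nonneg ?_ (sinh_pos_iff.2 hρ).le) hs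
  exact sinh_nonneg_iff.2 (by linarith)

variable (C) in
lemma tendsto_sinHalfTheta_div (hτ : 0 < τ) :
    Tendsto (fun n : ℕ => sinHalfTheta C τ n / (π * gam n τ / (2 * n))) atTop (𝓝 1) := by
  refine (tendsto_sinh_div_sinh_div_exp_sub
    ((tendsto_bigR_atTop C).atTop_div_const two_pos) (tendsto_rho_atTop C hτ)).congr' ?_
  filter_upwards [(tendsto_gam_atTop hτ).eventually_gt_atTop 0, eventually_gt_atTop 0]
    with n hg hn
  rw [exp_bigR_half_sub_rho hn hg, sinHalfTheta]

end

/-- **The number of sectors.**  The number `2π/θ_n` of sectors of angular width `θ_n`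
needed to cover the full angle `2π` equals `(2n/γ(n,τ))·(1 ± o(1))`, i.e.
`(2π/θ_n)·γ(n,τ)/(2n) → 1` as `n → ∞`. -/
theorem num_sectors_asymptotics (C τ : ℝ) (hτ : 0 < τ) :
    Tendsto (fun n : ℕ => (2 * Real.pi / theta C τ n) * gam n τ / (2 * n))
      atTop (nhds 1) := by
  have hs := tendsto_nhdsGT_zero_of_div_tendsto_one (tendsto_sinHalfTheta_div C hτ)
    (tendsto_pi_mul_gam_div_atTop hτ)
  have harcsin := tendsto_arcsin_div_self.comp
    (hs.mono_right (nhdsWithin_mono _ fun _ hx => ne_of_gt hx))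
  have hlim := (harcsin.mul (tendsto_sinHalfTheta_div C hτ)).inv₀ (by norm_num)
  rw [mul_one, inv_one] at hlim
  refine hlim.congr' ?_
  filter_upwards [hs.eventually self_mem_nhdsWithin,
    (tendsto_nhds_of_tendsto_nhdsWithin hs).eventually (eventually_lt_nhds one_pos),
    (tendsto_bigR_atTop C).eventually_ge_atTop 0, (tendsto_rho_atTop C hτ).eventually_gt_atTop 0]
    with n hs0 hs1 hR hρ
  rw [theta_eq_two_mul_arcsin hR hρ hs1.le, Function.comp_apply, div_mul_div_cancel₀ hs0.ne',
    inv_div]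
  ring
end

section
/- Fix τ > 0. There is a constant K > 0 such that the following holds for all sufficiently large n. Set γ = γ(n,τ) and w = e^{γ}·log^{(3)}(n). Let S_1, …, S_{n'} be a circular sequence of independent identically distributed {0,1}-valued random variables with n' ≤ 4n/γ, whose common success probability p satisfies p ≤ exp(−e^{−γ}) and 1 − p ≤ e^{−γ/4}. Let W be the sum of the lengths of all success runs of length greater than w. Then E[W] ≤ K·τ^{3/4}·n/(γ·(log^{(2)}(n))^{1/4}·(log^{(3)}(n))^{1/2}). -/
open MeasureTheory ProbabilityTheory Filter

/-- The threshold `w = e^{γ(n,τ)}·log^{(3)}(n)` distinguishing narrow and wide runs. -/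
noncomputable def wThr (n : ℕ) (τ : ℝ) : ℝ := Real.exp (gam n τ) * logloglog n

/-- The sum of the lengths of all success runs of length greater than `w` (the
number of indices lying in such a run). -/
noncomputable def runSumGT {n' : ℕ} (w : ℝ) (s : ZMod n' → Bool) : ℕ :=
  Nat.card {i : ZMod n' | w < (runLen s i : ℝ)}

/-!
By linearity, `E[W]` is the sum over sites `i` of the probability that the run through `i`
is longer than `w`. Put `L = ⌈w⌉`. A run of length `≥ L` through `i` either covers
`i, …, i + L - 1`, or ends just before the first failure `i + b` with `1 ≤ b < L` and then
covers the `L` sites before `i + b`. A union bound over these `L` windows gives the probability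
bound `p^L (L(1 - p) + p)`: the exact formula for `E[W] / n'` with `w + 1` replaced by `L`.

Write `y = log^{(2)} n` and `z = log^{(3)} n`. Then `e^γ = τ y / (2 z²)` and `w = e^γ z`. The
hypotheses on `p` give `p^L ≤ e^{-z} = 1/y` and `L(1 - p) + p ≤ 2 z e^{3γ/4}`. Since
`n' ≤ 4n/γ`, this leaves `E[W] ≤ 8 (τ/2)^{3/4} n / (γ y^{1/4} z^{1/2})`.

A circle with `n' ≤ L` is too short to hold the `L + 1` sites of such a window. In that case
the trivial bound `E[W] ≤ n' ≤ w + 1 = O(τ y)` is enough, because `n = e^{e^y}`.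
-/

open Finset Real

section

variable {n : ℕ} {s : ZMod n → Bool} {i : ZMod n}

lemma exists_run_of_runLen_pos (h : 0 < runLen s i) :
    ∃ j : ZMod n, (∀ m < runLen s i, s (j + m) = true) ∧
      ∃ t < runLen s i, i = j + t := by
  have hne : {k : ℕ | k ≤ n ∧ ∃ j : ZMod n, (∀ m : ℕ, m < k → s (j + m) = true) ∧
      ∃ t : ℕ, t < k ∧ i = j + t}.Nonempty := by
    by_contra hemp
    rw [Set.not_nonempty_iff_eq_empty] at hemp
    simp [runLen, hemp] at h
  obtain ⟨-, j, hrun, t, ht, rfl⟩ := Nat.sSup_mem hne ⟨n, fun k hk => hk.1⟩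
  exact ⟨j, hrun, t, ht, rfl⟩

lemma runLen_ge_cases {L : ℕ} (h : L ≤ runLen s i) :
    (∀ m < L, s (i + m) = true) ∨
      ∃ b ∈ Ico 1 L, s (i + b) = false ∧ ∀ m < L, s (i + b - L + m) = true := by
  classical
  by_cases hall : ∀ m < L, s (i + m) = true
  · exact Or.inl hall
  right
  have hex : ∃ b, b < L ∧ s (i + b) = false := by
    push Not at hall
    simpa using hall
  obtain ⟨j, hrun, t, ht, hij⟩ := exists_run_of_runLen_pos (s := s) (i := i) (by omega)
  set b := Nat.find hex
  obtain ⟨hbL, hb⟩ : b < L ∧ s (i + b) = false := Nat.find_spec hex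
  have hmin : ∀ m < b, s (i + m) = true := fun m hm => by
    simpa [hm.trans hbL] using Nat.find_min hex hm
  have hb0 : b ≠ 0 := by
    intro h0
    have hsi := hrun t ht
    rw [← hij] at hsi
    rw [h0, Nat.cast_zero, add_zero, hsi] at hb
    exact Bool.noConfusion hb
  have hrun_end : runLen s i ≤ t + b := by
    by_contra! hlt
    have := hrun (t + b) hlt
    rw [Nat.cast_add, ← add_assoc, ← hij, hb] at this
    exact Bool.false_ne_true this
  refine ⟨b, mem_Ico.2 ⟨Nat.one_le_iff_ne_zero.2 hb0, hbL⟩, hb, fun m hm => ?_⟩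
  rcases lt_or_ge (b + m) L with hbm | hbm
  · have hidx : i + b - L + m = j + ((t + b + m - L : ℕ) : ZMod n) := by
      rw [Nat.cast_sub (by omega), hij]
      push_cast
      ring
    exact hidx ▸ hrun _ (by omega)
  · have hidx : i + b - L + m = i + ((b + m - L : ℕ) : ZMod n) := by
      rw [Nat.cast_sub hbm]
      push_cast
      ring
    exact hidx ▸ hmin _ (by omega)

end

section

variable {Ω ι : Type*} [MeasurableSpace Ω] {μ : Measure Ω} [IsProbabilityMeasure μ]
  {S : ι → Ω → Bool} {p : ℝ}

lemma measureReal_eq_bernoulli (hS : ∀ i, Measurable (S i))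
    (hp : ∀ i, μ.real {ω | S i ω = true} = p) (i : ι) (v : Bool) :
    μ.real {ω | S i ω = v} = if v then p else 1 - p := by
  cases v
  · have hcompl : {ω | S i ω = false} = {ω | S i ω = true}ᶜ := by ext; simp
    rw [hcompl, probReal_compl_eq_one_sub (s := {ω | S i ω = true})
      (hS i (measurableSet_singleton true)), hp]
    rfl
  · exact hp i

lemma measureReal_biInter_eq_prod {κ : Type*} (hS : ∀ i, Measurable (S i))
    (hind : iIndepFun S μ) (hp : ∀ i, μ.real {ω | S i ω = true} = p)
    {t : Finset κ} {e : κ → ι} (he : Set.InjOn e t) (v : κ → Bool) :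
    μ.real (⋂ m ∈ t, {ω | S (e m) ω = v m}) = ∏ m ∈ t, if v m then p else 1 - p := by
  classical
  rcases isEmpty_or_nonempty κ with hκ | hκ
  · simp [t.eq_empty_of_isEmpty]
  set v' : ι → Bool := fun j => v (Function.invFunOn e t j)
  have hv' : ∀ m ∈ t, v' (e m) = v m := fun m hm => by
    simp only [v', he.leftInvOn_invFunOn hm]
  have hevent :
      (⋂ m ∈ t, {ω | S (e m) ω = v m}) = ⋂ j ∈ t.image e, S j ⁻¹' {v' j} := by
    ext ω
    simp +contextual [hv']
  rw [hevent, measureReal_def, hind.measure_inter_preimage_eq_mul _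
    (fun _ _ => measurableSet_singleton _), prod_image he, ENNReal.toReal_prod]
  refine prod_congr rfl fun m hm => ?_
  rw [hv' m hm, ← measureReal_eq_bernoulli hS hp]
  rfl

end

lemma injOn_add_natCast {n : ℕ} (x : ZMod n) :
    Set.InjOn (fun m : ℕ => x + m) (range n) := by
  intro a ha b hb hab
  simp only [coe_range, Set.mem_Iio] at ha hb
  have := (ZMod.natCast_eq_natCast_iff' a b n).1 (add_left_cancel hab)
  rwa [Nat.mod_eq_of_lt ha, Nat.mod_eq_of_lt hb] at this

lemma integral_natCard_setOf_mem {Ω ι : Type*} [MeasurableSpace Ω] {μ : Measure Ω}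
    [IsFiniteMeasure μ] [Fintype ι] {A : ι → Set Ω} (hA : ∀ i, MeasurableSet (A i)) :
    ∫ ω, (Nat.card {i | ω ∈ A i} : ℝ) ∂μ = ∑ i, μ.real (A i) := by
  classical
  have hcard (ω : Ω) : (Nat.card {i | ω ∈ A i} : ℝ) = ∑ i, (A i).indicator 1 ω := by
    rw [Nat.card_eq_fintype_card, Fintype.card_subtype, card_filter]
    push_cast
    simp [Set.indicator_apply]
  simp_rw [hcard]
  rw [integral_finsetSum _ fun i _ => (integrable_const 1).indicator (hA i)]
  simp [integral_indicator_one (hA _)]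

section

variable {Ω : Type*} [MeasurableSpace Ω] {μ : Measure Ω} [IsProbabilityMeasure μ]
  {n : ℕ} {S : ZMod n → Ω → Bool} {p : ℝ}

lemma measureReal_window (hS : ∀ i, Measurable (S i)) (hind : iIndepFun S μ)
    (hp : ∀ i, μ.real {ω | S i ω = true} = p) {k : ℕ} (hk : k ≤ n) (x : ZMod n)
    (v : ℕ → Bool) :
    μ.real (⋂ m ∈ range k, {ω | S (x + m) ω = v m}) =
      ∏ m ∈ range k, if v m then p else 1 - p :=
  measureReal_biInter_eq_prod hS hind hp
    ((injOn_add_natCast x).mono (by simpa using hk)) v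

lemma measureReal_le_runLen_le (hS : ∀ i, Measurable (S i)) (hind : iIndepFun S μ)
    (hp : ∀ i, μ.real {ω | S i ω = true} = p) {L : ℕ} (hL : 1 ≤ L) (hLn : L + 1 ≤ n)
    (i : ZMod n) :
    μ.real {ω | L ≤ runLen (fun j => S j ω) i} ≤ p ^ L * (L * (1 - p) + p) := by
  set A := ⋂ m ∈ range L, {ω | S (i + m) ω = true} with hA_def
  set B : ℕ → Set Ω := fun b =>
    ⋂ m ∈ range (L + 1), {ω | S (i + b - L + m) ω = decide (m < L)} with hB_def
  have hsub : {ω | L ≤ runLen (fun j => S j ω) i} ⊆ A ∪ ⋃ b ∈ Ico 1 L, B b := by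
    intro ω hω
    rcases runLen_ge_cases hω with hall | ⟨b, hb, hfalse, htrue⟩
    · left
      simpa [A] using hall
    · right
      simp only [Set.mem_iUnion]
      refine ⟨b, hb, ?_⟩
      simp only [B, Set.mem_iInter, mem_range, Set.mem_ofPred_eq]
      intro m hm
      rcases lt_or_eq_of_le (Nat.lt_succ_iff.1 hm) with hmL | rfl
      · simpa [hmL] using htrue m hmL
      · simpa using hfalse
  have hA : μ.real A = p ^ L := by
    rw [hA_def, measureReal_window hS hind hp (by omega) i (fun _ => true)]
    simp
  have hB : ∀ b, μ.real (B b) = p ^ L * (1 - p) := fun b => by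
    rw [hB_def, measureReal_window hS hind hp hLn]
    rw [prod_range_succ, prod_congr rfl fun m hm => if_pos (decide_eq_true (mem_range.1 hm))]
    simp
  calc μ.real {ω | L ≤ runLen (fun j => S j ω) i}
      ≤ μ.real A + ∑ b ∈ Ico 1 L, μ.real (B b) :=
        (measureReal_mono hsub).trans ((measureReal_union_le _ _).trans
          (by gcongr; exact measureReal_biUnion_finset_le _ _))
    _ = p ^ L * (L * (1 - p) + p) := by
        simp only [hA, hB, sum_const, Nat.card_Ico, nsmul_eq_mul, Nat.cast_sub hL]
        ring

lemma integral_runSumGT [NeZero n] (hS : ∀ i, Measurable (S i)) (w : ℝ) :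
    ∫ ω, (runSumGT w (fun i => S i ω) : ℝ) ∂μ =
      ∑ i, μ.real {ω | w < runLen (fun j => S j ω) i} :=
  integral_natCard_setOf_mem fun i => measurableSet_lt measurable_const
    ((measurable_of_countable fun s => (runLen s i : ℝ)).comp (measurable_pi_lambda _ hS))

lemma integral_runSumGT_le_card [NeZero n] (hS : ∀ i, Measurable (S i)) (w : ℝ) :
    ∫ ω, (runSumGT w (fun i => S i ω) : ℝ) ∂μ ≤ n := by
  rw [integral_runSumGT hS]
  calc ∑ i, μ.real {ω | w < runLen (fun j => S j ω) i} ≤ ∑ _i : ZMod n, (1 : ℝ) :=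
        sum_le_sum fun i _ => measureReal_le_one
    _ = n := by simp [ZMod.card]

lemma integral_runSumGT_le (hS : ∀ i, Measurable (S i)) (hind : iIndepFun S μ)
    (hp : ∀ i, μ.real {ω | S i ω = true} = p) {w : ℝ} {L : ℕ} (hL : 1 ≤ L)
    (hLw : (L : ℝ) - 1 ≤ w) (hLn : L + 1 ≤ n) :
    ∫ ω, (runSumGT w (fun i => S i ω) : ℝ) ∂μ ≤ n * (p ^ L * (L * (1 - p) + p)) := by
  have : NeZero n := ⟨by omega⟩
  rw [integral_runSumGT hS]
  calc ∑ i, μ.real {ω | w < runLen (fun j => S j ω) i}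
      ≤ ∑ i, μ.real {ω | L ≤ runLen (fun j => S j ω) i} := by
        refine sum_le_sum fun i _ => measureReal_mono fun ω hω => ?_
        have : (L : ℝ) < runLen (fun j => S j ω) i + 1 := by linarith [hLw.trans_lt hω]
        exact Nat.lt_add_one_iff.1 (by exact_mod_cast this)
    _ ≤ ∑ _i : ZMod n, p ^ L * (L * (1 - p) + p) :=
        sum_le_sum fun i _ => measureReal_le_runLen_le hS hind hp hL hLn i
    _ = n * (p ^ L * (L * (1 - p) + p)) := by simp [ZMod.card]

end

section

variable {τ γ y z p : ℝ}

lemma pow_le_exp_neg_of_le {L : ℕ} (hp0 : 0 ≤ p) (hp : p ≤ exp (-exp (-γ)))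
    (hL : exp γ * z ≤ L) : p ^ L ≤ exp (-z) := by
  have hz : z ≤ L * exp (-γ) := by
    rw [exp_neg, ← div_eq_mul_inv, le_div_iff₀ (exp_pos γ)]
    linarith
  calc p ^ L ≤ exp (-exp (-γ)) ^ L := pow_le_pow_left₀ hp0 hp L
    _ = exp (-(L * exp (-γ))) := by rw [← exp_nat_mul]; ring_nf
    _ ≤ exp (-z) := exp_le_exp.2 (by linarith)

lemma natCast_mul_one_sub_add_le {L : ℕ} (hγ : 0 ≤ γ) (hz : 1 ≤ z) (hp1 : p ≤ 1)
    (hp : 1 - p ≤ exp (-γ / 4)) (hL : (L : ℝ) ≤ exp γ * z + 1) :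
    L * (1 - p) + p ≤ 2 * z * exp (3 * γ / 4) := by
  have hsplit : exp γ * z * exp (-γ / 4) = z * exp (3 * γ / 4) := by
    rw [mul_right_comm, ← exp_add]; ring_nf
  have hone : 1 ≤ z * exp (3 * γ / 4) := by
    nlinarith [one_le_exp (by linarith : 0 ≤ 3 * γ / 4)]
  have hwide : ((L : ℝ) - 1) * (1 - p) ≤ exp γ * z * exp (-γ / 4) := by
    rcases le_or_gt (L : ℝ) 1 with hL1 | hL1
    · nlinarith [exp_pos (-γ / 4), exp_pos γ]
    · exact mul_le_mul (by linarith) hp (by linarith) (by positivity)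
  linarith

/-- The exponent of the left-hand side is `(3/4)(log τ - log 2)`. -/
lemma exp_neg_mul_rpow_le (hτ : 0 < τ) (hz : 0 < z) (hyz : exp z = y)
    (hγ : exp γ = τ * y / (2 * z ^ 2)) :
    exp (-z) * (2 * z * exp (3 * γ / 4)) * (y ^ (1 / 4 : ℝ) * z ^ (1 / 2 : ℝ)) ≤
      2 * τ ^ (3 / 4 : ℝ) := by
  have hlogγ : γ + log 2 + 2 * log z = log τ + z := by
    have h := congrArg log hγ
    rw [log_exp, ← hyz, log_div (by positivity) (by positivity),
      log_mul hτ.ne' (exp_pos z).ne', log_mul two_ne_zero (by positivity), log_pow, log_exp] at h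
    push_cast at h
    linarith
  rw [← hyz, ← exp_mul, rpow_def_of_pos hz, rpow_def_of_pos hτ]
  nth_rewrite 2 [← exp_log hz]
  calc exp (-z) * (2 * exp (log z) * exp (3 * γ / 4)) * (exp (z * (1 / 4)) * exp (log z * (1 / 2)))
      = 2 * exp (3 / 4 * (log τ - log 2)) := by
        simp only [mul_assoc, ← exp_add]
        rw [mul_left_comm, ← exp_add]
        congr 2
        linarith
    _ ≤ 2 * exp (log τ * (3 / 4)) := by
        gcongr 2 * exp ?_
        linarith [log_pos one_lt_two]

lemma natCast_mul_tail_le {N L : ℕ} {n : ℝ} (hτ : 0 < τ) (hγ0 : 0 < γ) (hz : 1 ≤ z)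
    (hyz : exp z = y) (hγ : exp γ = τ * y / (2 * z ^ 2)) (hN : N ≤ 4 * n / γ)
    (hp0 : 0 ≤ p) (hp1 : p ≤ 1) (hple : p ≤ exp (-exp (-γ))) (hpge : 1 - p ≤ exp (-γ / 4))
    (hwL : exp γ * z ≤ L) (hLw : (L : ℝ) ≤ exp γ * z + 1) :
    N * (p ^ L * (L * (1 - p) + p)) ≤
      8 * τ ^ (3 / 4 : ℝ) * n / (γ * y ^ (1 / 4 : ℝ) * z ^ (1 / 2 : ℝ)) := by
  have hy : 0 < y := hyz ▸ exp_pos z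
  have hD : 0 < y ^ (1 / 4 : ℝ) * z ^ (1 / 2 : ℝ) := by positivity
  have hq : p ^ L * (L * (1 - p) + p) * (y ^ (1 / 4 : ℝ) * z ^ (1 / 2 : ℝ)) ≤
      2 * τ ^ (3 / 4 : ℝ) :=
    calc p ^ L * (L * (1 - p) + p) * (y ^ (1 / 4 : ℝ) * z ^ (1 / 2 : ℝ))
        ≤ exp (-z) * (2 * z * exp (3 * γ / 4)) * (y ^ (1 / 4 : ℝ) * z ^ (1 / 2 : ℝ)) := by
          have : (0 : ℝ) ≤ L := L.cast_nonneg
          refine mul_le_mul_of_nonneg_right (mul_le_mul (pow_le_exp_neg_of_le hp0 hple hwL)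
            (natCast_mul_one_sub_add_le hγ0.le hz hp1 hpge hLw) (by nlinarith) (exp_pos _).le)
            hD.le
      _ ≤ 2 * τ ^ (3 / 4 : ℝ) := exp_neg_mul_rpow_le hτ (by linarith) hyz hγ
  have hn : 0 ≤ n := by
    have := (N.cast_nonneg (α := ℝ)).trans hN
    rwa [le_div_iff₀ hγ0, zero_mul, mul_nonneg_iff_of_pos_left four_pos] at this
  rw [le_div_iff₀ (by positivity)]
  calc N * (p ^ L * (L * (1 - p) + p)) * (γ * y ^ (1 / 4 : ℝ) * z ^ (1 / 2 : ℝ))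
      ≤ 4 * n / γ * (p ^ L * (L * (1 - p) + p)) *
          (γ * y ^ (1 / 4 : ℝ) * z ^ (1 / 2 : ℝ)) := by
        gcongr
    _ = 4 * n * (p ^ L * (L * (1 - p) + p) * (y ^ (1 / 4 : ℝ) * z ^ (1 / 2 : ℝ))) := by
        field_simp
    _ ≤ 4 * n * (2 * τ ^ (3 / 4 : ℝ)) := by gcongr
    _ = 8 * τ ^ (3 / 4 : ℝ) * n := by ring

lemma natCast_le_of_le_width {N : ℕ} {n : ℝ} (hτ : 0 < τ) (hγ0 : 0 < γ) (hz : 1 ≤ z)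
    (hyz : exp z = y) (hγ : exp γ = τ * y / (2 * z ^ 2)) (hN : N ≤ exp γ * z + 1)
    (hn : τ * (τ + 1) * y ^ 4 ≤ 8 * τ ^ (3 / 4 : ℝ) * n) :
    N ≤ 8 * τ ^ (3 / 4 : ℝ) * n / (γ * y ^ (1 / 4 : ℝ) * z ^ (1 / 2 : ℝ)) := by
  have hzy : z + 1 ≤ y := hyz ▸ add_one_le_exp z
  have hy : 0 < y := by linarith
  have hexpγ : exp γ * z ≤ τ * y := by
    rw [hγ, div_mul_eq_mul_div, div_le_iff₀ (by positivity)]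
    have : 0 < τ * y := by positivity
    nlinarith [mul_le_mul_of_nonneg_left (by nlinarith : z ≤ 2 * z ^ 2) this.le]
  have hγy : γ ≤ τ * y := by
    nlinarith [add_one_le_exp γ, exp_pos γ]
  have hy4 : y ^ (1 / 4 : ℝ) ≤ y := by
    simpa using rpow_le_rpow_of_exponent_le (by linarith : 1 ≤ y)
      (by norm_num : (1 / 4 : ℝ) ≤ 1)
  have hz2 : z ^ (1 / 2 : ℝ) ≤ y := by
    refine le_trans ?_ (by linarith : z ≤ y)
    simpa using rpow_le_rpow_of_exponent_le hz (by norm_num : (1 / 2 : ℝ) ≤ 1)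
  rw [le_div_iff₀ (by positivity)]
  calc (N : ℝ) * (γ * y ^ (1 / 4 : ℝ) * z ^ (1 / 2 : ℝ))
      ≤ ((τ + 1) * y) * (τ * y * y * y) := by
        gcongr
        linarith
    _ = τ * (τ + 1) * y ^ 4 := by ring
    _ ≤ 8 * τ ^ (3 / 4 : ℝ) * n := hn

end

lemma eventually_exp_exp_large {τ : ℝ} (hτ : 0 < τ) : ∀ᶠ y : ℝ in atTop,
    0 < y ∧ 1 ≤ log y ∧ 1 < τ * y / (2 * log y ^ 2) ∧
      τ * (τ + 1) * y ^ 4 ≤ 8 * τ ^ (3 / 4 : ℝ) * exp (exp y) := by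
  have hpos : ∀ᶠ y : ℝ in atTop, 0 < y := eventually_gt_atTop 0
  have hlog : ∀ᶠ y : ℝ in atTop, 1 ≤ log y := tendsto_log_atTop.eventually_ge_atTop 1
  have hratio : ∀ᶠ y : ℝ in atTop, 2 / τ < y / log y ^ 2 := by
    filter_upwards [tendsto_log_atTop.eventually
      ((tendsto_exp_div_pow_atTop 2).eventually_gt_atTop (2 / τ)), hpos] with y hy hy0
    rwa [exp_log hy0] at hy
  have hexp : ∀ᶠ y : ℝ in atTop, τ * (τ + 1) / (8 * τ ^ (3 / 4 : ℝ)) ≤ exp y / y ^ 4 :=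
    (tendsto_exp_div_pow_atTop 4).eventually_ge_atTop _
  filter_upwards [hpos, hlog, hratio, hexp] with y hy0 hy1 hyr hye
  refine ⟨hy0, hy1, ?_, ?_⟩
  · rw [div_lt_div_iff₀ hτ (by positivity)] at hyr
    rw [one_lt_div (by positivity)]
    linarith
  · rw [div_le_div_iff₀ (by positivity) (by positivity)] at hye
    calc τ * (τ + 1) * y ^ 4 ≤ 8 * τ ^ (3 / 4 : ℝ) * exp y := by linarith
      _ ≤ 8 * τ ^ (3 / 4 : ℝ) * exp (exp y) := by
        gcongr
        linarith [add_one_le_exp y]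

lemma eventually_loglog_large {τ : ℝ} (hτ : 0 < τ) : ∀ᶠ n : ℕ in atTop,
    1 ≤ logloglog n ∧ exp (logloglog n) = loglog n ∧
      1 < τ * loglog n / (2 * logloglog n ^ 2) ∧
      τ * (τ + 1) * loglog n ^ 4 ≤ 8 * τ ^ (3 / 4 : ℝ) * n := by
  have htend : Tendsto (fun n : ℕ => loglog n) atTop atTop :=
    (tendsto_log_atTop.comp tendsto_log_atTop).comp tendsto_natCast_atTop_atTop
  filter_upwards [htend.eventually (eventually_exp_exp_large hτ), eventually_ge_atTop 1]
    with n ⟨hy0, hy1, hratio, hpow⟩ hn1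
  have hlogn : 0 < log n := by
    rcases (Real.log_natCast_nonneg n).lt_or_eq with h | h
    · exact h
    · simp [loglog, ← h] at hy0
  have hn : exp (exp (loglog n)) = n := by
    rw [loglog, exp_log hlogn, exp_log (by exact_mod_cast hn1)]
  exact ⟨hy1, exp_log hy0, hratio, hn ▸ hpow⟩

/-- **Expected number of widening sectors.**
There is a constant `K > 0` such that for all sufficiently large `n`, for every circular
sequence of `n' ≤ 4n/γ(n,τ)` i.i.d. indicator random variables whose success
probability `p` satisfies `p ≤ exp(−e^{−γ})` and `1 − p ≤ e^{−γ/4}`, the expected sum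
`E[W]` of the lengths of all success runs of length greater than
`w = e^{γ}·log^{(3)}(n)` satisfies
`E[W] ≤ K·τ^{3/4}·n/(γ·(log^{(2)} n)^{1/4}·(log^{(3)} n)^{1/2})`. -/
theorem expected_widening_sectors (τ : ℝ) (hτ : 0 < τ) :
    ∃ K : ℝ, 0 < K ∧ ∀ᶠ n : ℕ in atTop,
      ∀ (n' : ℕ), 0 < n' → (n' : ℝ) ≤ 4 * n / gam n τ →
      ∀ (Ω : Type) (_ : MeasurableSpace Ω) (μ : Measure Ω),
        IsProbabilityMeasure μ →
      ∀ (S : ZMod n' → Ω → Bool), (∀ i, Measurable (S i)) →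
        iIndepFun S μ →
      ∀ p : ℝ, (∀ i, (μ {ω | S i ω = true}).toReal = p) →
        p ≤ Real.exp (-Real.exp (-gam n τ)) →
        1 - p ≤ Real.exp (-gam n τ / 4) →
      ∫ ω, (runSumGT (wThr n τ) (fun i => S i ω) : ℝ) ∂μ ≤
        K * τ ^ ((3 : ℝ) / 4) * n /
          (gam n τ * (loglog n) ^ ((1 : ℝ) / 4) * (logloglog n) ^ ((1 : ℝ) / 2)) := by
  refine ⟨8, by norm_num, ?_⟩
  filter_upwards [eventually_loglog_large hτ] with n ⟨hz, hyz, hratio, hn⟩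
  intro n' hn' hn'le Ω _ μ _ S hS hind p hp hple hpge
  have : NeZero n' := ⟨hn'.ne'⟩
  have hγ : exp (gam n τ) = τ * loglog n / (2 * logloglog n ^ 2) :=
    exp_log (by linarith)
  have hγ0 : 0 < gam n τ := log_pos hratio
  have hp0 : 0 ≤ p := hp 0 ▸ measureReal_nonneg
  have hp1 : p ≤ 1 := hp 0 ▸ measureReal_le_one
  have hw0 : 0 < wThr n τ := mul_pos (exp_pos _) (by linarith)
  set L := ⌈wThr n τ⌉₊
  have hwL : wThr n τ ≤ L := Nat.le_ceil _
  have hLw : (L : ℝ) ≤ wThr n τ + 1 := (Nat.ceil_lt_add_one hw0.le).le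
  rcases le_or_gt (L + 1) n' with hLn | hnL
  · calc ∫ ω, (runSumGT (wThr n τ) (fun i => S i ω) : ℝ) ∂μ
        ≤ n' * (p ^ L * (L * (1 - p) + p)) :=
          integral_runSumGT_le hS hind hp (Nat.ceil_pos.2 hw0) (by linarith) hLn
      _ ≤ _ := natCast_mul_tail_le hτ hγ0 hz hyz hγ hn'le hp0 hp1 hple hpge hwL hLw
  · calc ∫ ω, (runSumGT (wThr n τ) (fun i => S i ω) : ℝ) ∂μ ≤ n' :=
          integral_runSumGT_le_card hS _
      _ ≤ _ := natCast_le_of_le_width hτ hγ0 hz hyz hγ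
          ((Nat.cast_le.2 (Nat.lt_succ_iff.1 hnL)).trans hLw) hn
end
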